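/- Let X be a Noetherian scheme, H a group, d ≥ 1, and let ρ : H → GL_d(Γ(X, O_X)) be a group homomorphism into the invertible d×d matrices over the ring of global sections of X. For each point x ∈ X, let ρ_x : H → GL_d(κ(x)) be the homomorphism obtained by applying the canonical ring homomorphism Γ(X, O_X) → κ(x) to the residue field of x entrywise, and set r(x) = dim_{κ(x)} { v ∈ κ(x)^d : ρ_x(h)·v = v for all h ∈ H }. Then for every integer m ≥ 0, the set A = { x ∈ X : r(x) ≥ m } is a constructible subset of X. -/

import Mathlib

open AlgebraicGeometry CategoryTheory

/-- The subspace of simultaneous fixed vectors of a family of matrices acting on `Fin d → K`. -/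
def fixedVectors {K : Type*} [Field K] {d : ℕ} {H : Type*}
    (M : H → Matrix (Fin d) (Fin d) K) : Submodule K (Fin d → K) where
  carrier := {v | ∀ h : H, (M h).mulVec v = v}
  add_mem' := by
    intro v w hv hw h
    rw [Matrix.mulVec_add, hv h, hw h]
  zero_mem' := by
    intro h
    rw [Matrix.mulVec_zero]
  smul_mem' := by
    intro c v hv h
    rw [Matrix.mulVec_smul, hv h]


/-- A subset of a topological space is constructible if it is a finite union of sets of the
form `U ∩ Z` with `U` open and `Z` closed. -/
def IsConstructibleSet {Y : Type*} [TopologicalSpace Y] (s : Set Y) : Prop :=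
  ∃ (n : ℕ) (U Z : Fin n → Set Y),
    (∀ i, IsOpen (U i)) ∧ (∀ i, IsClosed (Z i)) ∧ s = ⋃ i, U i ∩ Z i

/-! The fibre `ρ_x` fixes exactly the kernel of the matrix obtained by stacking the matrices
`ρ_x(h) - 1` for all `h ∈ H`, so `r(x) = d - rank`. A matrix over a field, even with infinitely
many rows, has rank at most `k` iff all its `(k+1)`-minors vanish, and the minors of the fibre
matrix are the images in `κ(x)` of the minors of the stacked matrix over `Γ(X, O_X)`. Hence
`{x | r(x) ≥ m}` is the common zero locus of a family of global sections: it is closed. -/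

open Module Submodule Set Matrix

section LinearAlgebra

variable {K V : Type*} [Field K] [AddCommGroup V] [Module K V]

theorem exists_linearIndependent_comp_of_le_finrank_span {ι : Type*} (v : ι → V)
    [FiniteDimensional K (span K (range v))] {n : ℕ}
    (h : n ≤ finrank K (span K (range v))) :
    ∃ r : Fin n → ι, LinearIndependent K (v ∘ r) := by
  obtain ⟨κ, a, -, hspan, hli⟩ := exists_linearIndependent' K v
  have hli_span : LinearIndependent K
      fun k => (⟨v (a k), subset_span ⟨a k, rfl⟩⟩ : span K (range v)) :=
    .of_comp (span K (range v)).subtype hli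
  have : Fintype κ := have := hli_span.finite; Fintype.ofFinite κ
  have hcard : Fintype.card κ = finrank K (span K (range v)) :=
    hspan ▸ linearIndependent_iff_card_eq_finrank_span.mp hli
  obtain ⟨f⟩ : Nonempty (Fin n ↪ κ) :=
    Function.Embedding.nonempty_of_card_le (by simpa [hcard])
  exact ⟨a ∘ f, hli.comp f f.injective⟩

theorem finrank_span_range_le_iff_forall_not_linearIndependent {ι : Type*} (v : ι → V)
    [FiniteDimensional K (span K (range v))] (k : ℕ) :
    finrank K (span K (range v)) ≤ k ↔
      ∀ r : Fin (k + 1) → ι, ¬ LinearIndependent K (v ∘ r) := by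
  refine ⟨fun h r hr => ?_, fun h => ?_⟩
  · have hcard : k + 1 ≤ finrank K (span K (range (v ∘ r))) := by
      simpa [Set.finrank] using linearIndependent_iff_card_le_finrank_span.mp hr
    have := finrank_mono (R := K) (span_mono (range_comp_subset_range r v))
    omega
  · by_contra! hk
    obtain ⟨r, hr⟩ := exists_linearIndependent_comp_of_le_finrank_span v hk
    exact h r hr

namespace Matrix

theorem span_range_row_eq_top_of_linearIndependent_col {ι n : Type*} [Fintype n]
    {A : Matrix ι n K} (hA : LinearIndependent K A.col) : span K (range A.row) = ⊤ := by
  classical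
  by_contra hne
  obtain ⟨f, hf, hfA⟩ :=
    exists_dual_map_eq_bot_of_lt_top (lt_top_iff_ne_top.2 hne) inferInstance
  have hf_apply (w : n → K) : f w = ∑ j, w j * LinearEquiv.piRing K K n K f j := by
    have := LinearEquiv.piRing_symm_apply (S := K) (LinearEquiv.piRing K K n K f) w
    rwa [LinearEquiv.symm_apply_apply] at this
  refine hf <| (LinearEquiv.piRing K K n K).map_eq_zero_iff.mp <| funext <|
    Fintype.linearIndependent_iff.mp hA _ <| funext fun i => ?_
  have : f (A.row i) ∈ (⊥ : Submodule K K) := hfA ▸ mem_map_of_mem (subset_span ⟨i, rfl⟩)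
  rw [hf_apply, mem_bot] at this
  simpa [Finset.sum_apply, mul_comm] using this

theorem linearIndependent_col_iff_exists_det_submatrix_ne_zero {ι : Type*} {n : ℕ}
    (A : Matrix ι (Fin n) K) :
    LinearIndependent K A.col ↔ ∃ r : Fin n → ι, (A.submatrix r id).det ≠ 0 := by
  refine ⟨fun hA => ?_, fun ⟨r, hr⟩ => ?_⟩
  · obtain ⟨r, hr⟩ := exists_linearIndependent_comp_of_le_finrank_span A.row (n := n)
      (by rw [span_range_row_eq_top_of_linearIndependent_col hA, finrank_top, finrank_fin_fun])
    exact ⟨r, ((isUnit_iff_isUnit_det _).mp (linearIndependent_rows_iff_isUnit.mp hr)).ne_zero⟩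
  · exact .of_comp (LinearMap.funLeft K K r) (linearIndependent_cols_of_det_ne_zero hr)

theorem rank_le_iff_forall_det_submatrix_eq_zero {ι n : Type*} [Fintype n]
    (A : Matrix ι n K) (k : ℕ) :
    A.rank ≤ k ↔
      ∀ (r : Fin (k + 1) → ι) (c : Fin (k + 1) → n), (A.submatrix r c).det = 0 := by
  have : FiniteDimensional K (span K (range A.col)) :=
    FiniteDimensional.span_of_finite K (finite_range _)
  rw [rank_eq_finrank_span_cols, finrank_span_range_le_iff_forall_not_linearIndependent,
    forall_comm]
  refine forall_congr' fun c => ?_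
  rw [show A.col ∘ c = (A.submatrix id c).col from rfl,
    linearIndependent_col_iff_exists_det_submatrix_ne_zero, not_exists_not]
  rfl

end Matrix

end LinearAlgebra

section FixedVectors

variable {H : Type*} {d : ℕ}

def fixedVectorsSystem {R : Type*} [Ring R] (M : H → Matrix (Fin d) (Fin d) R) :
    Matrix (H × Fin d) (Fin d) R :=
  Matrix.of fun p => (M p.1 - 1) p.2

theorem fixedVectorsSystem_map {R S : Type*} [Ring R] [Ring S] (f : R →+* S)
    (M : H → Matrix (Fin d) (Fin d) R) :
    fixedVectorsSystem (fun h => (M h).map f) = (fixedVectorsSystem M).map f := by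
  ext ⟨h, i⟩ j
  simp [fixedVectorsSystem, Matrix.one_apply, apply_ite f]

variable {K : Type*} [Field K]

theorem fixedVectors_eq_ker_mulVecLin (M : H → Matrix (Fin d) (Fin d) K) :
    fixedVectors M = LinearMap.ker (fixedVectorsSystem M).mulVecLin := by
  ext v
  simp only [LinearMap.mem_ker, mulVecLin_apply, funext_iff, Prod.forall]
  change (∀ h, M h *ᵥ v = v) ↔ ∀ h i, ((M h - 1) *ᵥ v) i = 0
  simp only [sub_mulVec, one_mulVec, Pi.sub_apply, sub_eq_zero, ← funext_iff]

theorem finrank_fixedVectors_add_rank (M : H → Matrix (Fin d) (Fin d) K) :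
    finrank K (fixedVectors M) + (fixedVectorsSystem M).rank = d := by
  rw [fixedVectors_eq_ker_mulVecLin, Matrix.rank, add_comm,
    LinearMap.finrank_range_add_finrank_ker, finrank_fin_fun]

theorem le_finrank_fixedVectors_iff (M : H → Matrix (Fin d) (Fin d) K) {m : ℕ} (hm : m ≤ d) :
    m ≤ finrank K (fixedVectors M) ↔
      ∀ (r : Fin (d - m + 1) → H × Fin d) (c : Fin (d - m + 1) → Fin d),
        ((fixedVectorsSystem M).submatrix r c).det = 0 := by
  rw [← rank_le_iff_forall_det_submatrix_eq_zero]
  have := finrank_fixedVectors_add_rank M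
  omega

end FixedVectors

theorem AlgebraicGeometry.Scheme.isClosed_setOf_forall_Γevaluation_eq_zero (X : Scheme)
    {ι : Type*} (f : ι → Γ(X, ⊤)) :
    IsClosed {x : X | ∀ i, X.Γevaluation x (f i) = 0} := by
  convert X.zeroLocus_isClosed (range f)
  ext x
  rw [mem_ofPred, Scheme.mem_zeroLocus_iff, forall_mem_range]
  exact forall_congr' fun i => X.evaluation_eq_zero_iff_notMem_basicOpen x (U := ⊤) trivial (f i)

lemma IsClosed.isConstructibleSet {Y : Type*} [TopologicalSpace Y] {s : Set Y}
    (h : IsClosed s) : IsConstructibleSet s :=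
  ⟨1, fun _ => univ, fun _ => s, fun _ => isOpen_univ, fun _ => h, by simp [iUnion_const]⟩

theorem isConstructibleSet_finrank_fixedVectors_ge_general
    (X : Scheme)
    (H : Type*) [Group H] (d : ℕ)
    (ρ : H →* Matrix.GeneralLinearGroup (Fin d) Γ(X, ⊤)) (m : ℕ) :
    IsConstructibleSet {x : X | m ≤ Module.finrank (X.residueField x)
      (fixedVectors fun h : H =>
        (ρ h : Matrix (Fin d) (Fin d) Γ(X, ⊤)).map (X.Γevaluation x))} := by
  refine IsClosed.isConstructibleSet ?_
  obtain hmd | hdm := le_or_gt m d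
  · convert X.isClosed_setOf_forall_Γevaluation_eq_zero
      fun rc : (Fin (d - m + 1) → H × Fin d) × (Fin (d - m + 1) → Fin d) =>
        ((fixedVectorsSystem fun h => (ρ h : Matrix (Fin d) (Fin d) Γ(X, ⊤))).submatrix
          rc.1 rc.2).det using 1
    ext x
    rw [mem_ofPred, mem_ofPred, le_finrank_fixedVectors_iff _ hmd,
      fixedVectorsSystem_map (X.Γevaluation x).hom, Prod.forall]
    simp only [RingHom.map_det, RingHom.mapMatrix_apply, submatrix_map]
  · convert isClosed_empty
    ext x
    have := finrank_fixedVectors_add_rank fun h : H =>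
      (ρ h : Matrix (Fin d) (Fin d) Γ(X, ⊤)).map (X.Γevaluation x)
    simp only [mem_ofPred, mem_empty_iff_false, iff_false, not_le]
    omega

/-- For a group homomorphism `ρ : H → GL_d(Γ(X, O_X))` over a Noetherian scheme `X` and any
`m : ℕ`, the superlevel set `{x | r x ≥ m}` of the dimension `r x` of the space of
`H`-invariants of the fiber at `x` is constructible. -/
theorem isConstructibleSet_finrank_fixedVectors_ge
    (X : Scheme) [AlgebraicGeometry.IsNoetherian X]
    (H : Type*) [Group H] (d : ℕ) (hd : 1 ≤ d)
    (ρ : H →* Matrix.GeneralLinearGroup (Fin d) Γ(X, ⊤)) (m : ℕ) :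
    IsConstructibleSet {x : X | m ≤ Module.finrank (X.residueField x)
      (fixedVectors fun h : H =>
        (ρ h : Matrix (Fin d) (Fin d) Γ(X, ⊤)).map (X.Γevaluation x))} :=
  isConstructibleSet_finrank_fixedVectors_ge_general X H d ρ m
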